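/- arXiv:2407.02438 — 3 statements merged into one kernel-verified Lean document; each statement's English description precedes it below -/
import Mathlib

section
/- Let N ≥ 5 be an integer, let Ω ⊂ ℝ^N be a bounded open set with B(0,ρ) ⊆ Ω for some ρ > 0, and fix η ∈ (0,1). Then there exist C > 0 and ε₀ > 0 such that for every ε ∈ (0, ε₀), every λ ∈ (η, η^{−1}) and every τ ∈ ℝ^N with |τ| < η, setting λ_ε = λ ε^{−1/2}, ξ_ε = τ/λ_ε, and Ω_ε = Ω \ closedBall(0,ε), one has ∫_{ℝ^N \ Ω_ε} U_{λ_ε,ξ_ε}(x)^{2N/(N−2)} dx ≤ C ( λ_ε^{−N} + (ε λ_ε)^N ) ≤ C' ε^{N/2} for some C' depending only on C, λ, η. -/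
/-!
Write `L = λ ε^{-1/2}`; then `U_{L,ξ}^{2N/(N-2)} = (L / (1 + L² |x - ξ|²))^N`, and the complement of
`Ω_ε` lies in `B(0,ρ)ᶜ ∪ B̄(0,ε)`. Since `|ξ| ≤ √ε ≤ ρ/2`, on `B(0,ρ)ᶜ` we have `|x - ξ| ≥ |x|/2`,
so the integrand is at most `2^{2N} L^{-N} |x|^{-2N}`, which is integrable there because `2N > N`.
On `B̄(0,ε)` the integrand is at most `L^N`, contributing `|B(0,1)| (ε L)^N`.
Both `L^{-N}` and `(ε L)^N` are `ε^{N/2}` times a power of `λ`.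
-/

open MeasureTheory

/-- The standard bubble `U_{λ,ξ}(x) = λ^{(N-2)/2} (1+λ²|x-ξ|²)^{-(N-2)/2}`. -/
noncomputable def bubble (N : ℕ) (lam : ℝ) (ξ x : EuclideanSpace ℝ (Fin N)) : ℝ :=
  lam ^ (((N : ℝ) - 2) / 2) / (1 + lam ^ 2 * ‖x - ξ‖ ^ 2) ^ (((N : ℝ) - 2) / 2)

open Metric Module

lemma setIntegral_le_add_of_subset_union {X : Type*} [MeasurableSpace X] {μ : Measure X}
    {f : X → ℝ} {s t A : Set X} (hs : MeasurableSet s) (ht : MeasurableSet t)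
    (hfs : IntegrableOn f s μ) (hft : IntegrableOn f t μ) (hf : 0 ≤ f) (hA : A ⊆ s ∪ t) :
    ∫ x in A, f x ∂μ ≤ ∫ x in s, f x ∂μ + ∫ x in t, f x ∂μ := by
  rw [← Set.union_sdiff_self] at hA
  calc ∫ x in A, f x ∂μ ≤ ∫ x in s ∪ (t \ s), f x ∂μ :=
        setIntegral_mono_set (hfs.union (hft.mono_set Set.sdiff_subset))
          (Filter.Eventually.of_forall hf) hA.eventuallyLE
    _ = ∫ x in s, f x ∂μ + ∫ x in t \ s, f x ∂μ :=
        setIntegral_union Set.disjoint_sdiff_right (ht.diff hs) hfs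
          (hft.mono_set Set.sdiff_subset)
    _ ≤ ∫ x in s, f x ∂μ + ∫ x in t, f x ∂μ :=
        add_le_add_right (setIntegral_mono_set hft (Filter.Eventually.of_forall hf)
          Set.sdiff_subset.eventuallyLE) _

section Profile

variable {E : Type*} [NormedAddCommGroup E]

noncomputable def bubbleProfile (n : ℕ) (L : ℝ) (ξ x : E) : ℝ :=
  (L / (1 + L ^ 2 * ‖x - ξ‖ ^ 2)) ^ n

variable {n : ℕ} {L : ℝ} {ξ x : E}

lemma bubbleProfile_nonneg (hL : 0 ≤ L) : 0 ≤ bubbleProfile n L ξ x := by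
  unfold bubbleProfile; positivity

lemma continuous_bubbleProfile (n : ℕ) (L : ℝ) (ξ : E) : Continuous (bubbleProfile n L ξ) :=
  ((continuous_const.div (by fun_prop)) fun _ ↦ by positivity).pow n

lemma bubbleProfile_le_pow (hL : 0 ≤ L) : bubbleProfile n L ξ x ≤ L ^ n := by
  refine pow_le_pow_left₀ (by positivity) (div_le_self hL ?_) n
  nlinarith [sq_nonneg (L * ‖x - ξ‖)]

lemma bubbleProfile_le_inv_pow (hL : 0 < L) (hx : x ≠ ξ) :
    bubbleProfile n L ξ x ≤ ((L * ‖x - ξ‖ ^ 2) ^ n)⁻¹ := by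
  have hr : 0 < ‖x - ξ‖ := norm_pos_iff.mpr (sub_ne_zero.mpr hx)
  rw [← inv_pow]
  refine pow_le_pow_left₀ (by positivity) ?_ n
  rw [← one_div, div_le_div_iff₀ (by positivity) (by positivity)]
  nlinarith

lemma bubbleProfile_le_of_norm_le_half (hL : 0 < L) (hx : x ≠ 0) (hξ : ‖ξ‖ ≤ ‖x‖ / 2) :
    bubbleProfile n L ξ x ≤ (L ^ n)⁻¹ * (2 ^ (2 * n) * (‖x‖ ^ (2 * n))⁻¹) := by
  have hx0 : 0 < ‖x‖ := norm_pos_iff.mpr hx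
  have hfar : ‖x‖ / 2 ≤ ‖x - ξ‖ := by linarith [norm_sub_norm_le x ξ]
  have hxξ : x ≠ ξ := by
    rintro rfl
    linarith
  calc bubbleProfile n L ξ x ≤ ((L * ‖x - ξ‖ ^ 2) ^ n)⁻¹ := bubbleProfile_le_inv_pow hL hxξ
    _ ≤ ((L * (‖x‖ / 2) ^ 2) ^ n)⁻¹ := by gcongr
    _ = (L ^ n)⁻¹ * (2 ^ (2 * n) * (‖x‖ ^ (2 * n))⁻¹) := by
      rw [mul_pow, ← pow_mul, div_pow]
      field_simp

lemma bubbleProfile_le_of_notMem_ball {ρ : ℝ} (hL : 0 < L) (hρ : 0 < ρ) (hξ : ‖ξ‖ ≤ ρ / 2)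
    (hx : x ∉ ball 0 ρ) :
    bubbleProfile n L ξ x ≤ (L ^ n)⁻¹ * (2 ^ (2 * n) * (‖x‖ ^ (2 * n))⁻¹) := by
  have hρx : ρ ≤ ‖x‖ := by simpa using hx
  exact bubbleProfile_le_of_norm_le_half hL (norm_pos_iff.mp (hρ.trans_le hρx))
    (hξ.trans (by linarith))

lemma setIntegral_bubbleProfile_le_measureReal [MeasurableSpace E] {μ : Measure E} {s : Set E}
    (hL : 0 ≤ L) (hs : μ s < ⊤) : ∫ x in s, bubbleProfile n L ξ x ∂μ ≤ L ^ n * μ.real s := by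
  refine (Real.le_norm_self _).trans (norm_setIntegral_le_of_norm_le_const hs fun x _ ↦ ?_)
  rw [Real.norm_of_nonneg (bubbleProfile_nonneg hL)]
  exact bubbleProfile_le_pow hL

noncomputable def bubbleTailConst [MeasurableSpace E] (μ : Measure E) (n : ℕ) (ρ : ℝ) : ℝ :=
  2 ^ (2 * n) * ∫ x in (ball (0 : E) ρ)ᶜ, (‖x‖ ^ (2 * n))⁻¹ ∂μ + μ.real (ball (0 : E) 1)

lemma bubbleTailConst_nonneg [MeasurableSpace E] (μ : Measure E) (n : ℕ) (ρ : ℝ) :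
    0 ≤ bubbleTailConst μ n ρ :=
  add_nonneg (mul_nonneg (by positivity) (integral_nonneg fun _ ↦ by positivity))
    measureReal_nonneg

end Profile

section Integrals

variable {E : Type*} [NormedAddCommGroup E] [NormedSpace ℝ E] [FiniteDimensional ℝ E]
  [MeasurableSpace E] [BorelSpace E] {μ : Measure E} [μ.IsAddHaarMeasure]

lemma integrableOn_compl_ball_inv_norm_pow {k : ℕ} (hk : finrank ℝ E < k) {ρ : ℝ}
    (hρ : 0 < ρ) : IntegrableOn (fun x : E ↦ (‖x‖ ^ k)⁻¹) (ball 0 ρ)ᶜ μ := by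
  have hint : Integrable (fun x : E ↦ (1 + ‖x‖) ^ (-(k : ℝ))) μ :=
    integrable_one_add_norm (by exact_mod_cast hk)
  refine ((hint.const_mul ((1 + ρ⁻¹) ^ k)).integrableOn).mono'
    (by fun_prop) ((ae_restrict_iff' measurableSet_ball.compl).mpr (ae_of_all _ ?_))
  intro x hx
  have hρx : ρ ≤ ‖x‖ := by simpa using hx
  have hx0 : 0 < ‖x‖ := hρ.trans_le hρx
  have hgrow : 1 + ‖x‖ ≤ (1 + ρ⁻¹) * ‖x‖ := by
    have : 1 ≤ ρ⁻¹ * ‖x‖ := by rw [inv_mul_eq_div, one_le_div hρ]; exact hρx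
    linarith
  rw [Real.norm_of_nonneg (by positivity), Real.rpow_neg (by positivity), Real.rpow_natCast,
    ← div_eq_mul_inv, le_div_iff₀ (by positivity), ← div_eq_inv_mul,
    div_le_iff₀ (by positivity), ← mul_pow]
  gcongr

variable {n : ℕ} {L ρ : ℝ} {ξ : E}

lemma integrableOn_bubbleProfile_compl_ball (hn : finrank ℝ E < 2 * n) (hL : 0 < L)
    (hρ : 0 < ρ) (hξ : ‖ξ‖ ≤ ρ / 2) : IntegrableOn (bubbleProfile n L ξ) (ball 0 ρ)ᶜ μ :=
  ((((integrableOn_compl_ball_inv_norm_pow hn hρ).const_mul _).const_mul _).mono'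
    (continuous_bubbleProfile n L ξ).aestronglyMeasurable.restrict
    ((ae_restrict_iff' measurableSet_ball.compl).mpr (ae_of_all _ fun _ hx ↦ by
      rw [Real.norm_of_nonneg (bubbleProfile_nonneg hL.le)]
      exact bubbleProfile_le_of_notMem_ball hL hρ hξ hx)))

lemma setIntegral_bubbleProfile_compl_ball_le (hn : finrank ℝ E < 2 * n) (hL : 0 < L)
    (hρ : 0 < ρ) (hξ : ‖ξ‖ ≤ ρ / 2) :
    ∫ x in (ball 0 ρ)ᶜ, bubbleProfile n L ξ x ∂μ ≤
      (L ^ n)⁻¹ * (2 ^ (2 * n) * ∫ x in (ball 0 ρ)ᶜ, (‖x‖ ^ (2 * n))⁻¹ ∂μ) := by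
  rw [← integral_const_mul, ← integral_const_mul]
  exact setIntegral_mono_on (integrableOn_bubbleProfile_compl_ball hn hL hρ hξ)
    (((integrableOn_compl_ball_inv_norm_pow hn hρ).const_mul _).const_mul _)
    measurableSet_ball.compl fun _ hx ↦ bubbleProfile_le_of_notMem_ball hL hρ hξ hx

lemma setIntegral_bubbleProfile_le_of_subset (hn : finrank ℝ E = n) (hn0 : 0 < n)
    (hL : 0 < L) (hρ : 0 < ρ) (hξ : ‖ξ‖ ≤ ρ / 2) {ε : ℝ} (hε : 0 ≤ ε) {A : Set E}
    (hA : A ⊆ (ball 0 ρ)ᶜ ∪ closedBall 0 ε) :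
    ∫ x in A, bubbleProfile n L ξ x ∂μ ≤ bubbleTailConst μ n ρ * ((L ^ n)⁻¹ + (ε * L) ^ n) := by
  have hdim : finrank ℝ E < 2 * n := by omega
  have hfar := setIntegral_bubbleProfile_compl_ball_le (μ := μ) hdim hL hρ hξ
  have hnear := setIntegral_bubbleProfile_le_measureReal (ξ := ξ) (n := n) hL.le
    (measure_closedBall_lt_top (μ := μ) (x := 0) (r := ε))
  rw [Measure.addHaar_real_closedBall μ 0 hε, hn] at hnear
  have hI : 0 ≤ ∫ x in (ball (0 : E) ρ)ᶜ, (‖x‖ ^ (2 * n))⁻¹ ∂μ :=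
    integral_nonneg fun _ ↦ by positivity
  have hV : 0 ≤ μ.real (ball (0 : E) 1) := measureReal_nonneg
  have hX : 0 ≤ (L ^ n)⁻¹ := by positivity
  have hY : 0 ≤ ε ^ n * L ^ n := by positivity
  calc ∫ x in A, bubbleProfile n L ξ x ∂μ
      ≤ ∫ x in (ball 0 ρ)ᶜ, bubbleProfile n L ξ x ∂μ +
          ∫ x in closedBall 0 ε, bubbleProfile n L ξ x ∂μ :=
        setIntegral_le_add_of_subset_union measurableSet_ball.compl measurableSet_closedBall
          (integrableOn_bubbleProfile_compl_ball hdim hL hρ hξ)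
          ((continuous_bubbleProfile n L ξ).continuousOn.integrableOn_compact
            (isCompact_closedBall 0 ε))
          (fun _ ↦ bubbleProfile_nonneg hL.le) hA
    _ ≤ (L ^ n)⁻¹ * (2 ^ (2 * n) * ∫ x in (ball 0 ρ)ᶜ, (‖x‖ ^ (2 * n))⁻¹ ∂μ) +
          L ^ n * (ε ^ n * μ.real (ball 0 1)) := add_le_add hfar hnear
    _ ≤ _ := by
      rw [bubbleTailConst, mul_pow]
      nlinarith [mul_nonneg (mul_nonneg (by positivity : (0 : ℝ) ≤ 2 ^ (2 * n)) hI) hY,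
        mul_nonneg hV hX]

end Integrals

lemma bubble_rpow_eq_bubbleProfile {N : ℕ} (hN : N ≠ 2) {L : ℝ} (hL : 0 ≤ L)
    (ξ x : EuclideanSpace ℝ (Fin N)) :
    bubble N L ξ x ^ (2 * (N : ℝ) / ((N : ℝ) - 2)) = bubbleProfile N L ξ x := by
  have hN' : (N : ℝ) - 2 ≠ 0 := sub_ne_zero.mpr (by exact_mod_cast hN)
  have hexp : ((N : ℝ) - 2) / 2 * (2 * N / ((N : ℝ) - 2)) = N := by field_simp
  rw [bubble, ← Real.div_rpow hL (by positivity), ← Real.rpow_mul (by positivity), hexp,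
    Real.rpow_natCast, bubbleProfile]

lemma norm_inv_smul_le_sqrt {E : Type*} [NormedAddCommGroup E] [NormedSpace ℝ E] {lam ε : ℝ}
    (hlam : 0 < lam) (hε : 0 < ε) {τ : E} (hτ : ‖τ‖ ≤ lam) :
    ‖(lam * ε ^ (-(1 : ℝ) / 2))⁻¹ • τ‖ ≤ √ε := by
  rw [norm_smul, neg_div, Real.rpow_neg hε.le, ← Real.sqrt_eq_rpow, norm_inv,
    Real.norm_of_nonneg (by positivity), mul_inv, inv_inv]
  calc lam⁻¹ * √ε * ‖τ‖ ≤ lam⁻¹ * √ε * lam := by gcongr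
    _ = √ε := by field_simp

lemma rpow_neg_scaled_add_rpow_scaled {lam ε : ℝ} (hlam : 0 < lam) (hε : 0 < ε) (p : ℝ) :
    (lam * ε ^ (-(1 : ℝ) / 2)) ^ (-p) + (ε * (lam * ε ^ (-(1 : ℝ) / 2))) ^ p =
      (lam ^ (-p) + lam ^ p) * ε ^ (p / 2) := by
  have hε' : ε * ε ^ (-(1 : ℝ) / 2) = ε ^ ((1 : ℝ) / 2) := by
    rw [← Real.rpow_one_add' hε.le (by norm_num)]; norm_num
  rw [mul_left_comm, hε', Real.mul_rpow hlam.le (by positivity),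
    Real.mul_rpow hlam.le (by positivity), ← Real.rpow_mul hε.le, ← Real.rpow_mul hε.le]
  ring_nf

theorem bubble_tail_estimate_crit_general (N : ℕ) (hN : 5 ≤ N)
    (Ω : Set (EuclideanSpace ℝ (Fin N)))
    (ρ : ℝ) (hρ : 0 < ρ) (hball : Metric.ball (0 : EuclideanSpace ℝ (Fin N)) ρ ⊆ Ω)
    (η : ℝ) (hη : η ∈ Set.Ioo (0 : ℝ) 1) :
    ∃ C : ℝ, 0 < C ∧ ∃ ε₀ : ℝ, 0 < ε₀ ∧
      ∀ lam ∈ Set.Ioo η η⁻¹, ∃ C' : ℝ, 0 < C' ∧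
        ∀ ε ∈ Set.Ioo (0 : ℝ) ε₀, ∀ τ : EuclideanSpace ℝ (Fin N), ‖τ‖ < η →
          (∫ x in (Ω \ Metric.closedBall 0 ε)ᶜ,
              bubble N (lam * ε ^ (-(1 : ℝ) / 2))
                ((lam * ε ^ (-(1 : ℝ) / 2))⁻¹ • τ) x ^ (2 * (N : ℝ) / ((N : ℝ) - 2))) ≤
            C * ((lam * ε ^ (-(1 : ℝ) / 2)) ^ (-(N : ℝ)) +
              (ε * (lam * ε ^ (-(1 : ℝ) / 2))) ^ (N : ℝ)) ∧
          C * ((lam * ε ^ (-(1 : ℝ) / 2)) ^ (-(N : ℝ)) +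
              (ε * (lam * ε ^ (-(1 : ℝ) / 2))) ^ (N : ℝ)) ≤ C' * ε ^ ((N : ℝ) / 2) := by
  set K := bubbleTailConst (volume : Measure (EuclideanSpace ℝ (Fin N))) N ρ
  have hK : 0 ≤ K := bubbleTailConst_nonneg _ N ρ
  refine ⟨K + 1, by positivity, ρ ^ 2 / 4, by positivity, fun lam hlamη ↦ ?_⟩
  have hlam : 0 < lam := hη.1.trans hlamη.1
  refine ⟨(K + 1) * (lam ^ (-(N : ℝ)) + lam ^ (N : ℝ)), by positivity, fun ε ⟨hε, hερ⟩ τ hτ ↦ ?_⟩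
  set L := lam * ε ^ (-(1 : ℝ) / 2)
  have hL : 0 < L := by positivity
  have hξ : ‖L⁻¹ • τ‖ ≤ ρ / 2 :=
    (norm_inv_smul_le_sqrt hlam hε (hτ.le.trans hlamη.1.le)).trans
      (Real.sqrt_le_iff.mpr ⟨by positivity, by linarith⟩)
  have hsub : (Ω \ closedBall 0 ε)ᶜ ⊆ (ball 0 ρ)ᶜ ∪ closedBall 0 ε := by
    rw [Set.compl_sdiff, Set.union_comm]
    exact Set.union_subset_union_left _ (Set.compl_subset_compl.mpr hball)
  refine ⟨?_, by rw [rpow_neg_scaled_add_rpow_scaled hlam hε]; exact le_of_eq (by ring)⟩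
  rw [Real.rpow_neg hL.le, Real.rpow_natCast, Real.rpow_natCast]
  simp_rw [bubble_rpow_eq_bubbleProfile (by omega : N ≠ 2) hL.le]
  exact (setIntegral_bubbleProfile_le_of_subset finrank_euclideanSpace_fin (by omega) hL hρ hξ
    hε.le hsub).trans (by gcongr; linarith)

/-- Tail estimate for the `2^*`-power of the bubble outside the pierced domain
`Ω_ε = Ω \ B̄(0,ε)`, with `λ_ε = λ ε^{-1/2}` and `ξ_ε = τ/λ_ε`:
`∫_{ℝ^N \ Ω_ε} U_{λ_ε,ξ_ε}^{2N/(N-2)} ≤ C (λ_ε^{-N} + (ε λ_ε)^N) ≤ C' ε^{N/2}`. -/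
theorem bubble_tail_estimate_crit (N : ℕ) (hN : 5 ≤ N)
    (Ω : Set (EuclideanSpace ℝ (Fin N))) (hΩo : IsOpen Ω) (hΩb : Bornology.IsBounded Ω)
    (ρ : ℝ) (hρ : 0 < ρ) (hball : Metric.ball (0 : EuclideanSpace ℝ (Fin N)) ρ ⊆ Ω)
    (η : ℝ) (hη : η ∈ Set.Ioo (0 : ℝ) 1) :
    ∃ C : ℝ, 0 < C ∧ ∃ ε₀ : ℝ, 0 < ε₀ ∧
      ∀ lam ∈ Set.Ioo η η⁻¹, ∃ C' : ℝ, 0 < C' ∧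
        ∀ ε ∈ Set.Ioo (0 : ℝ) ε₀, ∀ τ : EuclideanSpace ℝ (Fin N), ‖τ‖ < η →
          (∫ x in (Ω \ Metric.closedBall 0 ε)ᶜ,
              bubble N (lam * ε ^ (-(1 : ℝ) / 2))
                ((lam * ε ^ (-(1 : ℝ) / 2))⁻¹ • τ) x ^ (2 * (N : ℝ) / ((N : ℝ) - 2))) ≤
            C * ((lam * ε ^ (-(1 : ℝ) / 2)) ^ (-(N : ℝ)) +
              (ε * (lam * ε ^ (-(1 : ℝ) / 2))) ^ (N : ℝ)) ∧
          C * ((lam * ε ^ (-(1 : ℝ) / 2)) ^ (-(N : ℝ)) +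
              (ε * (lam * ε ^ (-(1 : ℝ) / 2))) ^ (N : ℝ)) ≤ C' * ε ^ ((N : ℝ) / 2) :=
  bubble_tail_estimate_crit_general N hN Ω ρ hρ hball η hη
end

section
/- Let N ≥ 5 be an integer, let Ω ⊂ ℝ^N be a bounded open set with B(0,ρ) ⊆ Ω for some ρ > 0, and fix η ∈ (0,1). Then there exist C > 0 and ε₀ > 0 such that for every ε ∈ (0, ε₀), every λ ∈ (η, η^{−1}) and every τ ∈ ℝ^N with |τ| < η, setting λ_ε = λ ε^{−1/2}, ξ_ε = τ/λ_ε, and Ω_ε = Ω \ closedBall(0,ε), one has ∫_{ℝ^N \ Ω_ε} U_{λ_ε,ξ_ε}(x)^{(N+2)/(N−2)} dx ≤ C λ_ε^{−(N−2)/2} ( λ_ε^{−2} + (ε λ_ε)^N ) ≤ C' ε^{(N−2)/4} ( ε + ε^{N/2} ) for some C' depending only on C, λ, η. -/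
open MeasureTheory

lemma bubble_rpow_eq {N : ℕ} (hN : 5 ≤ N) {μ : ℝ} (hμ : 0 < μ)
    (ξ x : EuclideanSpace ℝ (Fin N)) :
    bubble N μ ξ x ^ (((N : ℝ) + 2) / ((N : ℝ) - 2)) =
      μ ^ (((N : ℝ) + 2) / 2) / (1 + μ ^ 2 * ‖x - ξ‖ ^ 2) ^ (((N : ℝ) + 2) / 2) := by
  have hN5 : (5 : ℝ) ≤ (N : ℝ) := by exact_mod_cast hN
  have hN2 : (0 : ℝ) < (N : ℝ) - 2 := by linarith
  have hD : (0 : ℝ) < 1 + μ ^ 2 * ‖x - ξ‖ ^ 2 := by positivity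
  rw [bubble, Real.div_rpow (by positivity) (by positivity),
    ← Real.rpow_mul hμ.le, ← Real.rpow_mul hD.le]
  congr 2 <;> · field_simp

set_option maxHeartbeats 2000000 in
/-- Tail estimate for the `(2^*-1)`-power of the bubble outside the pierced domain
`Ω_ε = Ω \ B̄(0,ε)`, with `λ_ε = λ ε^{-1/2}` and `ξ_ε = τ/λ_ε`:
`∫_{ℝ^N \ Ω_ε} U_{λ_ε,ξ_ε}^{(N+2)/(N-2)} ≤ C λ_ε^{-(N-2)/2}(λ_ε^{-2} + (ε λ_ε)^N)
  ≤ C' ε^{(N-2)/4}(ε + ε^{N/2})`. -/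
theorem bubble_tail_estimate_subcrit (N : ℕ) (hN : 5 ≤ N)
    (Ω : Set (EuclideanSpace ℝ (Fin N))) (hΩo : IsOpen Ω) (hΩb : Bornology.IsBounded Ω)
    (ρ : ℝ) (hρ : 0 < ρ) (hball : Metric.ball (0 : EuclideanSpace ℝ (Fin N)) ρ ⊆ Ω)
    (η : ℝ) (hη : η ∈ Set.Ioo (0 : ℝ) 1) :
    ∃ C : ℝ, 0 < C ∧ ∃ ε₀ : ℝ, 0 < ε₀ ∧
      ∀ lam ∈ Set.Ioo η η⁻¹, ∃ C' : ℝ, 0 < C' ∧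
        ∀ ε ∈ Set.Ioo (0 : ℝ) ε₀, ∀ τ : EuclideanSpace ℝ (Fin N), ‖τ‖ < η →
          (∫ x in (Ω \ Metric.closedBall 0 ε)ᶜ,
              bubble N (lam * ε ^ (-(1 : ℝ) / 2))
                ((lam * ε ^ (-(1 : ℝ) / 2))⁻¹ • τ) x ^ (((N : ℝ) + 2) / ((N : ℝ) - 2))) ≤
            C * (lam * ε ^ (-(1 : ℝ) / 2)) ^ (-((N : ℝ) - 2) / 2) *
              ((lam * ε ^ (-(1 : ℝ) / 2)) ^ (-(2 : ℝ)) +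
                (ε * (lam * ε ^ (-(1 : ℝ) / 2))) ^ (N : ℝ)) ∧
          C * (lam * ε ^ (-(1 : ℝ) / 2)) ^ (-((N : ℝ) - 2) / 2) *
              ((lam * ε ^ (-(1 : ℝ) / 2)) ^ (-(2 : ℝ)) +
                (ε * (lam * ε ^ (-(1 : ℝ) / 2))) ^ (N : ℝ)) ≤
            C' * ε ^ (((N : ℝ) - 2) / 4) * (ε + ε ^ ((N : ℝ) / 2)) := by
  obtain ⟨hη0, hη1⟩ := hη
  have hN5 : (5 : ℝ) ≤ (N : ℝ) := by exact_mod_cast hN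
  set q : ℝ := ((N : ℝ) + 2) / 2 with hqdef
  have hq0 : 0 < q := by rw [hqdef]; positivity
  set K : ℝ := ∫ y : EuclideanSpace ℝ (Fin N), ((1 : ℝ) + ‖y‖) ^ (-((N : ℝ) + 2)) with hKdef
  have hK : 0 ≤ K := integral_nonneg fun y => by positivity
  set c₀ : ℝ := (1 + 2 / ρ) ^ ((N : ℝ) + 2) with hc₀def
  have hc₀ : 0 < c₀ := Real.rpow_pos_of_pos (by positivity) _
  set vB : ℝ := (volume (Metric.ball (0 : EuclideanSpace ℝ (Fin N)) 1)).toReal with hvBdef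
  have hvB : 0 ≤ vB := ENNReal.toReal_nonneg
  set C : ℝ := c₀ * K + vB + 1 with hCdef
  have hC : 0 < C := by have := mul_nonneg hc₀.le hK; rw [hCdef]; linarith
  refine ⟨C, hC, min 1 (ρ ^ 2 / 4), by positivity, fun lam hlam => ?_⟩
  obtain ⟨hlam1, hlam2⟩ := hlam
  have hlam0 : 0 < lam := hη0.trans hlam1
  have hlr : 0 < lam ^ (-((N : ℝ) - 2) / 2) := Real.rpow_pos_of_pos hlam0 _
  have hl2 : 0 < lam ^ (-(2 : ℝ)) := Real.rpow_pos_of_pos hlam0 _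
  have hlN : 0 < lam ^ (N : ℝ) := Real.rpow_pos_of_pos hlam0 _
  refine ⟨C * lam ^ (-((N : ℝ) - 2) / 2) * (lam ^ (-(2 : ℝ)) + lam ^ (N : ℝ)),
    by positivity, ?_⟩
  intro ε hε τ hτ
  obtain ⟨hε0, hεlt⟩ := hε
  have hε1 : ε < 1 := lt_of_lt_of_le hεlt (min_le_left _ _)
  have hερ : ε < ρ ^ 2 / 4 := lt_of_lt_of_le hεlt (min_le_right _ _)
  set μ : ℝ := lam * ε ^ (-(1 : ℝ) / 2) with hμdef
  have hεr : 0 < ε ^ (-(1 : ℝ) / 2) := Real.rpow_pos_of_pos hε0 _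
  have hμ0 : 0 < μ := mul_pos hlam0 hεr
  set ξ : EuclideanSpace ℝ (Fin N) := μ⁻¹ • τ with hξdef
  -- ‖ξ‖ ≤ ρ/2
  have hsqrt : ε ^ ((1 : ℝ) / 2) ≤ ρ / 2 := by
    rw [← Real.sqrt_eq_rpow]
    have h : Real.sqrt ε ≤ Real.sqrt ((ρ / 2) ^ 2) := Real.sqrt_le_sqrt (by nlinarith)
    rwa [Real.sqrt_sq (by positivity)] at h
  have hμinv : μ⁻¹ = lam⁻¹ * ε ^ ((1 : ℝ) / 2) := by
    rw [hμdef, mul_inv]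
    congr 1
    rw [← Real.rpow_neg hε0.le]
    norm_num
  have hξρ : ‖ξ‖ ≤ ρ / 2 := by
    have hn : ‖ξ‖ = μ⁻¹ * ‖τ‖ := by
      rw [hξdef, norm_smul, Real.norm_eq_abs, abs_of_pos (inv_pos.2 hμ0)]
    have h1 : lam⁻¹ * ‖τ‖ ≤ 1 := by
      have hinv : 0 < lam⁻¹ := inv_pos.2 hlam0
      have : lam⁻¹ * lam = 1 := inv_mul_cancel₀ hlam0.ne'
      nlinarith [norm_nonneg τ]
    have h2 : (0:ℝ) ≤ ε ^ ((1 : ℝ) / 2) := (Real.rpow_pos_of_pos hε0 _).le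
    calc ‖ξ‖ = (lam⁻¹ * ‖τ‖) * ε ^ ((1 : ℝ) / 2) := by rw [hn, hμinv]; ring
      _ ≤ 1 * ε ^ ((1 : ℝ) / 2) := mul_le_mul_of_nonneg_right h1 h2
      _ ≤ ρ / 2 := by rw [one_mul]; exact hsqrt
  have hdist : ∀ x : EuclideanSpace ℝ (Fin N), x ∈ Ωᶜ → ρ / 2 ≤ ‖x - ξ‖ := by
    intro x hx
    have hxρ : ρ ≤ ‖x‖ := by
      by_contra h
      exact hx (hball (by simpa [Metric.mem_ball, dist_zero_right] using not_le.mp h))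
    have := norm_sub_norm_le x ξ
    linarith
  set f : EuclideanSpace ℝ (Fin N) → ℝ := fun x => μ ^ q / (1 + μ ^ 2 * ‖x - ξ‖ ^ 2) ^ q with hfdef
  have hDpos : ∀ x : EuclideanSpace ℝ (Fin N), (0:ℝ) < 1 + μ ^ 2 * ‖x - ξ‖ ^ 2 := fun x => by positivity
  have hf_nonneg : ∀ x, 0 ≤ f x := fun x => by
    have := hDpos x
    rw [hfdef]
    positivity
  have hden_cont : Continuous fun x : EuclideanSpace ℝ (Fin N) => (1 + μ ^ 2 * ‖x - ξ‖ ^ 2 : ℝ) :=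
    continuous_const.add (continuous_const.mul ((continuous_id.sub continuous_const).norm.pow 2))
  have hf_cont : Continuous f := by
    refine continuous_const.div (hden_cont.rpow_const fun x => Or.inr hq0.le) fun x => ?_
    exact (Real.rpow_pos_of_pos (hDpos x) q).ne'
  have hbub : ∀ x : EuclideanSpace ℝ (Fin N), bubble N μ ξ x ^ (((N : ℝ) + 2) / ((N : ℝ) - 2)) = f x :=
    fun x => bubble_rpow_eq hN hμ0 ξ x
  have hsets : (Ω \ Metric.closedBall 0 ε)ᶜ = Ωᶜ ∪ Metric.closedBall 0 ε := by
    rw [Set.diff_eq, Set.compl_inter, compl_compl]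
  set T1 : ℝ := c₀ * K * μ ^ (-q) with hT1def
  set T2 : ℝ := μ ^ q * (ε ^ N * vB) with hT2def
  have hμq : 0 < μ ^ q := Real.rpow_pos_of_pos hμ0 _
  have hμnq : 0 < μ ^ (-q) := Real.rpow_pos_of_pos hμ0 _
  have hT1 : 0 ≤ T1 := by rw [hT1def]; positivity
  have hT2 : 0 ≤ T2 := by rw [hT2def]; positivity
  -- the ball part
  have lint2 : (∫⁻ x in Metric.closedBall (0 : EuclideanSpace ℝ (Fin N)) ε, ENNReal.ofReal (f x)) ≤
      ENNReal.ofReal T2 := by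
    have hfle : ∀ x ∈ Metric.closedBall (0 : EuclideanSpace ℝ (Fin N)) ε, ENNReal.ofReal (f x) ≤
        ENNReal.ofReal (μ ^ q) := by
      intro x _
      refine ENNReal.ofReal_le_ofReal ?_
      rw [hfdef]
      refine div_le_self hμq.le (Real.one_le_rpow ?_ hq0.le)
      exact le_add_of_nonneg_right (by positivity)
    calc (∫⁻ x in Metric.closedBall (0 : EuclideanSpace ℝ (Fin N)) ε, ENNReal.ofReal (f x))
        ≤ ∫⁻ _ in Metric.closedBall (0 : EuclideanSpace ℝ (Fin N)) ε, ENNReal.ofReal (μ ^ q) :=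
          setLIntegral_mono measurable_const hfle
      _ = ENNReal.ofReal (μ ^ q) * volume (Metric.closedBall (0 : EuclideanSpace ℝ (Fin N)) ε) :=
          setLIntegral_const _ _
      _ = ENNReal.ofReal (μ ^ q) *
            (ENNReal.ofReal (ε ^ Module.finrank ℝ (EuclideanSpace ℝ (Fin N))) * volume (Metric.ball (0 : EuclideanSpace ℝ (Fin N)) 1)) := by
          rw [Measure.addHaar_closedBall volume (0 : EuclideanSpace ℝ (Fin N)) hε0.le]
      _ = ENNReal.ofReal T2 := by
          rw [show Module.finrank ℝ (EuclideanSpace ℝ (Fin N)) = N from finrank_euclideanSpace_fin,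
            ← ENNReal.ofReal_toReal (measure_ball_lt_top (x := (0 : EuclideanSpace ℝ (Fin N))) (r := 1)).ne,
            ← hvBdef, ← ENNReal.ofReal_mul (by positivity), ← ENNReal.ofReal_mul hμq.le,
            hT2def]
  -- the outer part
  set g : EuclideanSpace ℝ (Fin N) → ℝ := fun x => (c₀ * μ ^ (-q)) * ((1:ℝ) + ‖x - ξ‖) ^ (-((N:ℝ) + 2)) with hgdef
  have hg_nonneg : ∀ x, 0 ≤ g x := fun x => by
    rw [hgdef]
    have := norm_nonneg (x - ξ)
    positivity
  have hg_cont : Continuous g := by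
    refine Continuous.mul continuous_const ?_
    refine Continuous.rpow_const ?_ fun x => Or.inl ?_
    · exact continuous_const.add (continuous_id.sub continuous_const).norm
    · have := norm_nonneg (x - ξ); positivity
  have hg_int : Integrable g := by
    have h0 : Integrable (fun y : EuclideanSpace ℝ (Fin N) => ((1:ℝ) + ‖y‖) ^ (-((N:ℝ) + 2))) := by
      refine integrable_one_add_norm ?_
      rw [show Module.finrank ℝ (EuclideanSpace ℝ (Fin N)) = N from finrank_euclideanSpace_fin]
      push_cast
      linarith
    exact (h0.comp_sub_right ξ).const_mul _
  have hfg : ∀ x ∈ Ωᶜ, f x ≤ g x := by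
    intro x hx
    set t : ℝ := ‖x - ξ‖ with htdef
    have ht : ρ / 2 ≤ t := hdist x hx
    have ht0 : 0 < t := lt_of_lt_of_le (by positivity) ht
    have hDq : μ ^ ((N:ℝ) + 2) * t ^ ((N:ℝ) + 2) ≤ (1 + μ ^ 2 * t ^ 2) ^ q := by
      have hμ2 : ((μ : ℝ) ^ 2) ^ q = μ ^ ((N:ℝ) + 2) := by
        rw [← Real.rpow_natCast μ 2, ← Real.rpow_mul hμ0.le]
        congr 1
        push_cast
        rw [hqdef]; ring
      have ht2 : ((t : ℝ) ^ 2) ^ q = t ^ ((N:ℝ) + 2) := by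
        rw [← Real.rpow_natCast t 2, ← Real.rpow_mul ht0.le]
        congr 1
        push_cast
        rw [hqdef]; ring
      have h1 : μ ^ ((N:ℝ) + 2) * t ^ ((N:ℝ) + 2) = (μ ^ 2 * t ^ 2) ^ q := by
        rw [← hμ2, ← ht2, ← Real.mul_rpow (sq_nonneg μ) (sq_nonneg t)]
      rw [h1]
      exact Real.rpow_le_rpow (by positivity) (le_add_of_nonneg_left zero_le_one) hq0.le
    have hstep1 : f x ≤ μ ^ (-q) * t ^ (-((N:ℝ) + 2)) := by
      have hpos : (0:ℝ) < μ ^ ((N:ℝ) + 2) * t ^ ((N:ℝ) + 2) :=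
        mul_pos (Real.rpow_pos_of_pos hμ0 _) (Real.rpow_pos_of_pos ht0 _)
      have h2 : f x ≤ μ ^ q / (μ ^ ((N:ℝ) + 2) * t ^ ((N:ℝ) + 2)) := by
        rw [hfdef]
        exact div_le_div_of_nonneg_left hμq.le hpos hDq
      refine h2.trans (le_of_eq ?_)
      rw [Real.rpow_neg hμ0.le, Real.rpow_neg ht0.le]
      have hμμ : μ ^ ((N:ℝ) + 2) = μ ^ q * μ ^ q := by
        rw [← Real.rpow_add hμ0]
        congr 1
        rw [hqdef]; ring
      rw [hμμ]
      field_simp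
    have hstep2 : t ^ (-((N:ℝ) + 2)) ≤ c₀ * ((1:ℝ) + t) ^ (-((N:ℝ) + 2)) := by
      have h1t : 1 + t ≤ (1 + 2 / ρ) * t := by
        have h2' : (2 / ρ) * (ρ / 2) ≤ (2 / ρ) * t := mul_le_mul_of_nonneg_left ht (by positivity)
        have h3 : (2 / ρ) * (ρ / 2) = 1 := by field_simp
        linarith
      have hApos : (0:ℝ) < t ^ ((N:ℝ) + 2) := Real.rpow_pos_of_pos ht0 _
      have hBpos : (0:ℝ) < ((1:ℝ) + t) ^ ((N:ℝ) + 2) :=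
        Real.rpow_pos_of_pos (by positivity) _
      have hBA : ((1:ℝ) + t) ^ ((N:ℝ) + 2) ≤ c₀ * t ^ ((N:ℝ) + 2) := by
        calc ((1:ℝ) + t) ^ ((N:ℝ) + 2) ≤ ((1 + 2 / ρ) * t) ^ ((N:ℝ) + 2) :=
              Real.rpow_le_rpow (by positivity) h1t (by positivity)
          _ = c₀ * t ^ ((N:ℝ) + 2) := by
              rw [Real.mul_rpow (by positivity) ht0.le, hc₀def]
      rw [Real.rpow_neg ht0.le, Real.rpow_neg (by positivity : (0:ℝ) ≤ 1 + t),
        inv_eq_one_div, inv_eq_one_div, mul_one_div, div_le_div_iff₀ hApos hBpos, one_mul]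
      exact hBA
    calc f x ≤ μ ^ (-q) * t ^ (-((N:ℝ) + 2)) := hstep1
      _ ≤ μ ^ (-q) * (c₀ * ((1:ℝ) + t) ^ (-((N:ℝ) + 2))) :=
          mul_le_mul_of_nonneg_left hstep2 hμnq.le
      _ = g x := by rw [hgdef]; ring
  have lint1 : (∫⁻ x in Ωᶜ, ENNReal.ofReal (f x)) ≤ ENNReal.ofReal T1 := by
    calc (∫⁻ x in Ωᶜ, ENNReal.ofReal (f x))
        ≤ ∫⁻ x in Ωᶜ, ENNReal.ofReal (g x) :=
          setLIntegral_mono (ENNReal.measurable_ofReal.comp hg_cont.measurable)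
            fun x hx => ENNReal.ofReal_le_ofReal (hfg x hx)
      _ ≤ ∫⁻ x, ENNReal.ofReal (g x) := setLIntegral_le_lintegral _ _
      _ = ENNReal.ofReal (∫ x, g x) :=
          (ofReal_integral_eq_lintegral_ofReal hg_int
            (Filter.Eventually.of_forall hg_nonneg)).symm
      _ = ENNReal.ofReal T1 := by
          congr 1
          rw [hgdef]
          calc (∫ x : EuclideanSpace ℝ (Fin N), (c₀ * μ ^ (-q)) * ((1:ℝ) + ‖x - ξ‖) ^ (-((N:ℝ) + 2)))
              = (c₀ * μ ^ (-q)) * ∫ x : EuclideanSpace ℝ (Fin N), ((1:ℝ) + ‖x - ξ‖) ^ (-((N:ℝ) + 2)) :=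
                integral_const_mul _ _
            _ = (c₀ * μ ^ (-q)) * K := by
                rw [hKdef]
                congr 1
                exact integral_sub_right_eq_self (fun y : EuclideanSpace ℝ (Fin N) => ((1:ℝ) + ‖y‖) ^ (-((N:ℝ) + 2))) ξ
            _ = T1 := by rw [hT1def]; ring
  -- assemble the first inequality
  have hRHS1 : (0:ℝ) ≤ C * μ ^ (-((N : ℝ) - 2) / 2) *
      (μ ^ (-(2 : ℝ)) + (ε * μ) ^ (N : ℝ)) := by
    have h1 := Real.rpow_nonneg hμ0.le (-((N : ℝ) - 2) / 2)
    have h2 := Real.rpow_nonneg hμ0.le (-(2:ℝ))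
    have h3 := Real.rpow_nonneg (mul_nonneg hε0.le hμ0.le) ((N : ℝ))
    exact mul_nonneg (mul_nonneg hC.le h1) (add_nonneg h2 h3)
  have hrealineq : T1 + T2 ≤ C * μ ^ (-((N : ℝ) - 2) / 2) *
      (μ ^ (-(2 : ℝ)) + (ε * μ) ^ (N : ℝ)) := by
    have e1 : μ ^ (-q) = μ ^ (-((N:ℝ) - 2) / 2) * μ ^ (-(2:ℝ)) := by
      rw [← Real.rpow_add hμ0]
      congr 1
      rw [hqdef]; ring
    have e2 : μ ^ (-((N:ℝ) - 2) / 2) * (ε * μ) ^ ((N:ℝ)) = μ ^ q * ε ^ N := by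
      rw [Real.mul_rpow hε0.le hμ0.le, Real.rpow_natCast ε N,
        show μ ^ q = μ ^ (-((N:ℝ) - 2) / 2) * μ ^ ((N:ℝ)) from by
          rw [← Real.rpow_add hμ0]; congr 1; rw [hqdef]; ring]
      ring
    have ha : (0:ℝ) ≤ μ ^ (-((N:ℝ) - 2) / 2) := Real.rpow_nonneg hμ0.le _
    have hb : (0:ℝ) ≤ μ ^ (-(2:ℝ)) := Real.rpow_nonneg hμ0.le _
    have hw : (0:ℝ) ≤ (ε * μ) ^ ((N:ℝ)) := Real.rpow_nonneg (by positivity) _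
    have hT2' : T2 = μ ^ (-((N:ℝ) - 2) / 2) * (ε * μ) ^ ((N:ℝ)) * vB := by
      rw [hT2def]; linear_combination vB * e2.symm
    rw [hT1def, hT2', hCdef, e1]
    have expand : (c₀ * K + vB + 1) * (μ ^ (-((N:ℝ) - 2) / 2) * μ ^ (-(2:ℝ)) +
          μ ^ (-((N:ℝ) - 2) / 2) * (ε * μ) ^ ((N:ℝ))) -
        (c₀ * K * (μ ^ (-((N:ℝ) - 2) / 2) * μ ^ (-(2:ℝ))) +
          μ ^ (-((N:ℝ) - 2) / 2) * (ε * μ) ^ ((N:ℝ)) * vB) =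
        (vB + 1) * (μ ^ (-((N:ℝ) - 2) / 2) * μ ^ (-(2:ℝ))) +
          (c₀ * K + 1) * (μ ^ (-((N:ℝ) - 2) / 2) * (ε * μ) ^ ((N:ℝ))) := by ring
    have h1' := mul_nonneg (add_nonneg hvB zero_le_one) (mul_nonneg ha hb)
    have h2' := mul_nonneg (add_nonneg (mul_nonneg hc₀.le hK) zero_le_one)
      (mul_nonneg ha hw)
    have hgoal : c₀ * K * (μ ^ (-((N:ℝ) - 2) / 2) * μ ^ (-(2:ℝ))) +
          μ ^ (-((N:ℝ) - 2) / 2) * (ε * μ) ^ ((N:ℝ)) * vB ≤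
        (c₀ * K + vB + 1) * (μ ^ (-((N:ℝ) - 2) / 2) * μ ^ (-(2:ℝ)) +
          μ ^ (-((N:ℝ) - 2) / 2) * (ε * μ) ^ ((N:ℝ))) := by linarith
    calc c₀ * K * (μ ^ (-((N:ℝ) - 2) / 2) * μ ^ (-(2:ℝ))) +
          μ ^ (-((N:ℝ) - 2) / 2) * (ε * μ) ^ ((N:ℝ)) * vB
        ≤ (c₀ * K + vB + 1) * (μ ^ (-((N:ℝ) - 2) / 2) * μ ^ (-(2:ℝ)) +
            μ ^ (-((N:ℝ) - 2) / 2) * (ε * μ) ^ ((N:ℝ))) := hgoal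
      _ = (c₀ * K + vB + 1) * μ ^ (-((N:ℝ) - 2) / 2) *
            (μ ^ (-(2:ℝ)) + (ε * μ) ^ (N : ℝ)) := by ring
  constructor
  · calc (∫ x in (Ω \ Metric.closedBall 0 ε)ᶜ,
          bubble N μ ξ x ^ (((N : ℝ) + 2) / ((N : ℝ) - 2)))
        = ∫ x in (Ω \ Metric.closedBall 0 ε)ᶜ, f x :=
          integral_congr_ae (Filter.Eventually.of_forall fun x => hbub x)
      _ = (∫⁻ x in (Ω \ Metric.closedBall 0 ε)ᶜ, ENNReal.ofReal (f x)).toReal :=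
          integral_eq_lintegral_of_nonneg_ae (Filter.Eventually.of_forall hf_nonneg)
            hf_cont.aestronglyMeasurable.restrict
      _ ≤ C * μ ^ (-((N : ℝ) - 2) / 2) * (μ ^ (-(2 : ℝ)) + (ε * μ) ^ (N : ℝ)) := by
          refine ENNReal.toReal_le_of_le_ofReal hRHS1 ?_
          calc (∫⁻ x in (Ω \ Metric.closedBall 0 ε)ᶜ, ENNReal.ofReal (f x))
              = ∫⁻ x in Ωᶜ ∪ Metric.closedBall 0 ε, ENNReal.ofReal (f x) := by rw [hsets]
            _ ≤ (∫⁻ x in Ωᶜ, ENNReal.ofReal (f x)) +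
                  ∫⁻ x in Metric.closedBall 0 ε, ENNReal.ofReal (f x) :=
                lintegral_union_le _ _ _
            _ ≤ ENNReal.ofReal T1 + ENNReal.ofReal T2 := add_le_add lint1 lint2
            _ = ENNReal.ofReal (T1 + T2) := (ENNReal.ofReal_add hT1 hT2).symm
            _ ≤ ENNReal.ofReal (C * μ ^ (-((N : ℝ) - 2) / 2) *
                  (μ ^ (-(2 : ℝ)) + (ε * μ) ^ (N : ℝ))) :=
                ENNReal.ofReal_le_ofReal hrealineq
  · -- second inequality
    have g1 : μ ^ (-((N:ℝ) - 2) / 2) = lam ^ (-((N:ℝ) - 2) / 2) * ε ^ (((N:ℝ) - 2) / 4) := by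
      rw [hμdef, Real.mul_rpow hlam0.le hεr.le]
      congr 1
      rw [← Real.rpow_mul hε0.le]
      congr 1
      ring
    have g2 : μ ^ (-(2:ℝ)) = lam ^ (-(2:ℝ)) * ε := by
      rw [hμdef, Real.mul_rpow hlam0.le hεr.le]
      congr 1
      rw [← Real.rpow_mul hε0.le]
      norm_num
    have g3 : (ε * μ) ^ ((N:ℝ)) = lam ^ ((N:ℝ)) * ε ^ ((N:ℝ) / 2) := by
      have hεμ : ε * μ = lam * ε ^ ((1:ℝ) / 2) := by
        rw [hμdef, show ε * (lam * ε ^ (-(1:ℝ) / 2)) =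
          lam * (ε ^ (1:ℝ) * ε ^ (-(1:ℝ) / 2)) from by rw [Real.rpow_one]; ring,
          ← Real.rpow_add hε0]
        norm_num
      rw [hεμ, Real.mul_rpow hlam0.le (Real.rpow_nonneg hε0.le _), ← Real.rpow_mul hε0.le]
      congr 1
      ring
    rw [g1, g2, g3]
    have hεs : (0:ℝ) ≤ ε ^ (((N:ℝ) - 2) / 4) := Real.rpow_nonneg hε0.le _
    have hεN2 : (0:ℝ) ≤ ε ^ ((N:ℝ) / 2) := Real.rpow_nonneg hε0.le _
    have key : lam ^ (-(2:ℝ)) * ε + lam ^ ((N:ℝ)) * ε ^ ((N:ℝ) / 2) ≤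
        (lam ^ (-(2:ℝ)) + lam ^ ((N:ℝ))) * (ε + ε ^ ((N:ℝ) / 2)) := by
      have expand2 : (lam ^ (-(2:ℝ)) + lam ^ ((N:ℝ))) * (ε + ε ^ ((N:ℝ) / 2)) -
          (lam ^ (-(2:ℝ)) * ε + lam ^ ((N:ℝ)) * ε ^ ((N:ℝ) / 2)) =
          lam ^ (-(2:ℝ)) * ε ^ ((N:ℝ) / 2) + lam ^ ((N:ℝ)) * ε := by ring
      have hx1 := mul_nonneg hl2.le hεN2
      have hx2 := mul_nonneg hlN.le hε0.le
      linarith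
    calc C * (lam ^ (-((N:ℝ) - 2) / 2) * ε ^ (((N:ℝ) - 2) / 4)) *
          (lam ^ (-(2:ℝ)) * ε + lam ^ ((N:ℝ)) * ε ^ ((N:ℝ) / 2))
        = (C * lam ^ (-((N:ℝ) - 2) / 2) * ε ^ (((N:ℝ) - 2) / 4)) *
            (lam ^ (-(2:ℝ)) * ε + lam ^ ((N:ℝ)) * ε ^ ((N:ℝ) / 2)) := by ring
      _ ≤ (C * lam ^ (-((N:ℝ) - 2) / 2) * ε ^ (((N:ℝ) - 2) / 4)) *
            ((lam ^ (-(2:ℝ)) + lam ^ ((N:ℝ))) * (ε + ε ^ ((N:ℝ) / 2))) :=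
          mul_le_mul_of_nonneg_left key
            (mul_nonneg (mul_nonneg hC.le hlr.le) hεs)
      _ = C * lam ^ (-((N:ℝ) - 2) / 2) * (lam ^ (-(2:ℝ)) + lam ^ ((N:ℝ))) *
            ε ^ (((N:ℝ) - 2) / 4) * (ε + ε ^ ((N:ℝ) / 2)) := by ring
end

section
/- Let N ≥ 5 be an integer and R > 1. Then there exists C > 0, depending only on N and R, such that for every λ ≥ 2 and every ξ ∈ ℝ^N with |ξ| ≤ 1, one has ∫_{B(0,R)} U_{λ,ξ}(x)^{(N+2)/(N−2)} |x−ξ|² dx ≤ C λ^{−(N+2)/2} log λ. -/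
/-!
In the variable `s = λ|x - ξ|` the integrand is `λ^{(N-2)/2} s² (1 + s²)^{-(N+2)/2}`, which is
at most `λ^{(N-2)/2}` and at most `λ^{(N-2)/2} s^{-N}`. Since `B(0,R) ⊆ B(ξ,R+1)`, the ball
`|x - ξ| ≤ 1/λ` contributes `λ^{(N-2)/2} λ^{-N} |B₁|`, and on the annulus `1/λ < |x - ξ| ≤ R+1`
the majorant `λ^{-(N+2)/2} |x - ξ|^{-N}` integrates in polar coordinates to
`λ^{-(N+2)/2} N |B₁| log((R+1)λ)`.
-/

open MeasureTheory Metric Set Module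

lemma exists_pos_add_mul_log_le_mul_log (a b : ℝ) :
    ∃ C, 0 < C ∧ ∀ t : ℝ, 2 ≤ t → a + b * Real.log t ≤ C * Real.log t := by
  have hlog2 : 0 < Real.log 2 := Real.log_pos one_lt_two
  refine ⟨|a| / Real.log 2 + |b| + 1, by positivity, fun t ht => ?_⟩
  have hlog : Real.log 2 ≤ Real.log t := Real.log_le_log two_pos ht
  have ha : a ≤ |a| / Real.log 2 * Real.log t := by
    rw [div_mul_eq_mul_div, le_div_iff₀ hlog2]
    nlinarith [le_abs_self a, abs_nonneg a]
  nlinarith [le_abs_self b]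

lemma closedBall_diff_closedBall_eq_preimage {E : Type*} [SeminormedAddCommGroup E] (ξ : E)
    (a b : ℝ) : closedBall ξ b \ closedBall ξ a = (fun x => ‖x - ξ‖) ⁻¹' Ioc a b := by
  ext x
  simp [dist_eq_norm, and_comm]

section Annulus

variable {E : Type*} [NormedAddCommGroup E] [NormedSpace ℝ E] [FiniteDimensional ℝ E]
  [MeasurableSpace E] [BorelSpace E] (μ : Measure E) [μ.IsAddHaarMeasure]

lemma integrableOn_annulus_inv_norm_sub_pow (ξ : E) (n : ℕ) {a : ℝ} (ha : 0 < a) (b : ℝ) :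
    IntegrableOn (fun x => (‖x - ξ‖ ^ n)⁻¹) (closedBall ξ b \ closedBall ξ a) μ := by
  refine Measure.integrableOn_of_bounded (M := (a ^ n)⁻¹)
    (measure_mono sdiff_subset |>.trans_lt measure_closedBall_lt_top).ne
    (by fun_prop) ?_
  refine ae_restrict_of_forall_mem (measurableSet_closedBall.diff measurableSet_closedBall)
    fun x hx => ?_
  rw [closedBall_diff_closedBall_eq_preimage] at hx
  rw [Real.norm_of_nonneg (by positivity)]
  exact inv_anti₀ (pow_pos ha n) (pow_le_pow_left₀ ha.le hx.1.le n)

lemma setIntegral_annulus_inv_norm_sub_pow_finrank (ξ : E) {a b : ℝ} (ha : 0 < a)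
    (hab : a ≤ b) :
    ∫ x in closedBall ξ b \ closedBall ξ a, (‖x - ξ‖ ^ finrank ℝ E)⁻¹ ∂μ =
      finrank ℝ E * μ.real (ball 0 1) * Real.log (b / a) := by
  rcases subsingleton_or_nontrivial E with hE | hE
  · have hempty : closedBall ξ b \ closedBall ξ a = ∅ := by
      rw [closedBall_diff_closedBall_eq_preimage]
      ext x
      simp [Subsingleton.elim x ξ, ha.not_gt]
    simp [hempty, finrank_zero_of_subsingleton]
  set d := finrank ℝ E
  have hd : 1 ≤ d := finrank_pos
  set f : ℝ → ℝ := (Ioc a b).indicator fun r => (r ^ d)⁻¹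
  have hradial : ∀ y : ℝ, y ^ (d - 1) • f y = (Ioc a b).indicator (fun r => r⁻¹) y := by
    intro y
    by_cases hy : y ∈ Ioc a b
    · have hy0 : y ≠ 0 := (ha.trans hy.1).ne'
      simp only [f, indicator_of_mem hy, smul_eq_mul]
      rw [← Nat.sub_add_cancel hd, pow_succ, Nat.sub_add_cancel hd]
      field_simp
    · simp [f, hy]
  have hIoi : ∫ y in Ioi (0 : ℝ), y ^ (d - 1) • f y = Real.log (b / a) := by
    simp only [hradial]
    rw [setIntegral_indicator measurableSet_Ioc,
      inter_eq_right.mpr (Ioc_subset_Ioi_self.trans (Ioi_subset_Ioi ha.le)),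
      ← intervalIntegral.integral_of_le hab, integral_inv_of_pos ha (ha.trans_le hab)]
  rw [closedBall_diff_closedBall_eq_preimage,
    ← integral_indicator (measurableSet_Ioc.preimage (by fun_prop))]
  change ∫ x, f ‖x - ξ‖ ∂μ = _
  rw [integral_sub_right_eq_self (fun x => f ‖x‖) ξ, integral_fun_norm_addHaar μ f, hIoi,
    nsmul_eq_mul, smul_eq_mul, mul_assoc]

end Annulus

lemma sq_div_one_add_sq_rpow_le_one (s : ℝ) {m : ℝ} (hm : 1 ≤ m) :
    s ^ 2 / (1 + s ^ 2) ^ m ≤ 1 := by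
  have h1 : 1 ≤ 1 + s ^ 2 := by nlinarith [sq_nonneg s]
  refine div_le_one_of_le₀ ?_ (by positivity)
  calc s ^ 2 ≤ (1 + s ^ 2) ^ (1 : ℝ) := by rw [Real.rpow_one]; linarith
    _ ≤ (1 + s ^ 2) ^ m := Real.rpow_le_rpow_of_exponent_le h1 hm

lemma sq_div_one_add_sq_rpow_le_inv_pow {s : ℝ} (hs : 0 ≤ s) (n : ℕ) :
    s ^ 2 / (1 + s ^ 2) ^ (((n : ℝ) + 2) / 2) ≤ (s ^ n)⁻¹ := by
  rcases hs.eq_or_lt with rfl | hs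
  · simp only [ne_eq, OfNat.ofNat_ne_zero, not_false_eq_true, zero_pow, zero_div]
    positivity
  rw [div_le_iff₀ (by positivity), ← div_eq_inv_mul, le_div_iff₀ (by positivity), ← pow_add]
  calc s ^ (2 + n) = (s ^ 2) ^ (((n : ℝ) + 2) / 2) := by
        rw [← Real.rpow_natCast, ← Real.rpow_natCast s 2, ← Real.rpow_mul hs.le]
        push_cast
        ring_nf
    _ ≤ (1 + s ^ 2) ^ (((n : ℝ) + 2) / 2) := by
        gcongr
        linarith

section Bubble

variable {N : ℕ} {lam : ℝ}

lemma bubble_pos (hlam : 0 < lam) (ξ x : EuclideanSpace ℝ (Fin N)) : 0 < bubble N lam ξ x := by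
  unfold bubble
  positivity

lemma continuous_bubble (N : ℕ) (lam : ℝ) (ξ : EuclideanSpace ℝ (Fin N)) :
    Continuous (bubble N lam ξ) := by
  unfold bubble
  refine continuous_const.div (Continuous.rpow_const (by fun_prop) fun x => Or.inl ?_)
    fun x => ?_ <;> positivity

lemma bubble_rpow_mul_norm_sq (hN : 2 < N) (hlam : 0 < lam) (ξ x : EuclideanSpace ℝ (Fin N)) :
    bubble N lam ξ x ^ (((N : ℝ) + 2) / ((N : ℝ) - 2)) * ‖x - ξ‖ ^ 2 =
      lam ^ (((N : ℝ) - 2) / 2) *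
        ((lam * ‖x - ξ‖) ^ 2 / (1 + (lam * ‖x - ξ‖) ^ 2) ^ (((N : ℝ) + 2) / 2)) := by
  have hN2 : (N : ℝ) - 2 ≠ 0 := by
    have : (2 : ℝ) < N := by exact_mod_cast hN
    linarith
  have hD : 0 < 1 + lam ^ 2 * ‖x - ξ‖ ^ 2 := by positivity
  have hexp : ((N : ℝ) - 2) / 2 * (((N : ℝ) + 2) / ((N : ℝ) - 2)) = ((N : ℝ) + 2) / 2 := by
    field_simp
  have hlam_pow : lam ^ (((N : ℝ) + 2) / 2) = lam ^ (((N : ℝ) - 2) / 2) * lam ^ 2 := by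
    rw [← Real.rpow_natCast lam 2, ← Real.rpow_add hlam]
    push_cast
    ring_nf
  unfold bubble
  rw [Real.div_rpow (by positivity) (by positivity), ← Real.rpow_mul hlam.le,
    ← Real.rpow_mul hD.le, hexp, hlam_pow, mul_pow]
  ring

lemma bubble_rpow_mul_norm_sq_le (hN : 2 < N) (hlam : 0 < lam) (ξ x : EuclideanSpace ℝ (Fin N)) :
    bubble N lam ξ x ^ (((N : ℝ) + 2) / ((N : ℝ) - 2)) * ‖x - ξ‖ ^ 2 ≤
      lam ^ (((N : ℝ) - 2) / 2) := by
  rw [bubble_rpow_mul_norm_sq hN hlam]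
  refine mul_le_of_le_one_right (by positivity) (sq_div_one_add_sq_rpow_le_one _ ?_)
  have : (2 : ℝ) < N := by exact_mod_cast hN
  linarith

lemma bubble_rpow_mul_norm_sq_le_inv_pow (hN : 2 < N) (hlam : 0 < lam)
    (ξ x : EuclideanSpace ℝ (Fin N)) :
    bubble N lam ξ x ^ (((N : ℝ) + 2) / ((N : ℝ) - 2)) * ‖x - ξ‖ ^ 2 ≤
      lam ^ (((N : ℝ) - 2) / 2) * (lam ^ N)⁻¹ * (‖x - ξ‖ ^ N)⁻¹ := by
  rw [bubble_rpow_mul_norm_sq hN hlam, mul_assoc, ← mul_inv, ← mul_pow]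
  gcongr
  exact sq_div_one_add_sq_rpow_le_inv_pow (by positivity) N

lemma rpow_sub_two_div_two_mul_inv_pow (hlam : 0 < lam) (N : ℕ) :
    lam ^ (((N : ℝ) - 2) / 2) * (lam ^ N)⁻¹ = lam ^ (-((N : ℝ) + 2) / 2) := by
  rw [← Real.rpow_natCast, ← Real.rpow_neg hlam.le, ← Real.rpow_add hlam]
  ring_nf

lemma continuous_bubble_rpow_mul_norm_sq (hlam : 0 < lam) (ξ : EuclideanSpace ℝ (Fin N)) :
    Continuous fun x => bubble N lam ξ x ^ (((N : ℝ) + 2) / ((N : ℝ) - 2)) * ‖x - ξ‖ ^ 2 :=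
  ((continuous_bubble N lam ξ).rpow_const fun x => Or.inl (bubble_pos hlam ξ x).ne').mul
    (by fun_prop)

lemma setIntegral_closedBall_bubble_rpow_mul_norm_sq_le (hN : 2 < N) (hlam : 0 < lam)
    (ξ : EuclideanSpace ℝ (Fin N)) {r : ℝ} (hr : 0 ≤ r) :
    ∫ x in closedBall ξ r, bubble N lam ξ x ^ (((N : ℝ) + 2) / ((N : ℝ) - 2)) * ‖x - ξ‖ ^ 2 ≤
      lam ^ (((N : ℝ) - 2) / 2) *
        (r ^ N * volume.real (ball (0 : EuclideanSpace ℝ (Fin N)) 1)) := by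
  have hbound := norm_setIntegral_le_of_norm_le_const (C := lam ^ (((N : ℝ) - 2) / 2))
    (f := fun x => bubble N lam ξ x ^ (((N : ℝ) + 2) / ((N : ℝ) - 2)) * ‖x - ξ‖ ^ 2)
    (measure_closedBall_lt_top (μ := volume) (x := ξ) (r := r)) fun x _ => by
      rw [Real.norm_of_nonneg (by have := bubble_pos hlam ξ x; positivity)]
      exact bubble_rpow_mul_norm_sq_le hN hlam ξ x
  rw [Measure.addHaar_real_closedBall _ _ hr, finrank_euclideanSpace_fin] at hbound
  exact (Real.le_norm_self _).trans hbound

lemma setIntegral_annulus_bubble_rpow_mul_norm_sq_le (hN : 2 < N) (hlam : 0 < lam)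
    (ξ : EuclideanSpace ℝ (Fin N)) {a b : ℝ} (ha : 0 < a) (hab : a ≤ b) :
    ∫ x in closedBall ξ b \ closedBall ξ a,
        bubble N lam ξ x ^ (((N : ℝ) + 2) / ((N : ℝ) - 2)) * ‖x - ξ‖ ^ 2 ≤
      lam ^ (((N : ℝ) - 2) / 2) * (lam ^ N)⁻¹ *
        (N * volume.real (ball (0 : EuclideanSpace ℝ (Fin N)) 1) * Real.log (b / a)) := by
  have hmajorant_int := (integrableOn_annulus_inv_norm_sub_pow volume ξ N ha b).const_mul
    (lam ^ (((N : ℝ) - 2) / 2) * (lam ^ N)⁻¹)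
  have hf_int : IntegrableOn _ (closedBall ξ b \ closedBall ξ a) :=
    (continuous_bubble_rpow_mul_norm_sq hlam ξ).continuousOn.integrableOn_compact
      (isCompact_closedBall ξ b) |>.mono_set sdiff_subset
  refine (setIntegral_mono_on hf_int hmajorant_int
    (measurableSet_closedBall.diff measurableSet_closedBall)
    fun x _ => bubble_rpow_mul_norm_sq_le_inv_pow hN hlam ξ x).trans_eq ?_
  have hpolar := setIntegral_annulus_inv_norm_sub_pow_finrank volume ξ ha hab
  rw [finrank_euclideanSpace_fin] at hpolar
  rw [integral_const_mul, hpolar]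

lemma setIntegral_bubble_rpow_mul_norm_sq_le (hN : 2 < N) (hlam : 0 < lam)
    (ξ : EuclideanSpace ℝ (Fin N)) {ρ : ℝ} (hρ : 1 / lam ≤ ρ) {s : Set (EuclideanSpace ℝ (Fin N))}
    (hs : s ⊆ closedBall ξ ρ) :
    ∫ x in s, bubble N lam ξ x ^ (((N : ℝ) + 2) / ((N : ℝ) - 2)) * ‖x - ξ‖ ^ 2 ≤
      lam ^ (-((N : ℝ) + 2) / 2) *
        (volume.real (ball (0 : EuclideanSpace ℝ (Fin N)) 1) +
          N * volume.real (ball (0 : EuclideanSpace ℝ (Fin N)) 1) * Real.log (ρ * lam)) := by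
  set f := fun x => bubble N lam ξ x ^ (((N : ℝ) + 2) / ((N : ℝ) - 2)) * ‖x - ξ‖ ^ 2
  have hscale : 0 < 1 / lam := by positivity
  have hf_int : IntegrableOn f (closedBall ξ ρ) :=
    (continuous_bubble_rpow_mul_norm_sq hlam ξ).continuousOn.integrableOn_compact
      (isCompact_closedBall ξ ρ)
  have hf_nonneg : ∀ x, 0 ≤ f x := fun x =>
    mul_nonneg (Real.rpow_nonneg (bubble_pos hlam ξ x).le _) (sq_nonneg _)
  calc ∫ x in s, f x ≤ ∫ x in closedBall ξ ρ, f x :=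
        setIntegral_mono_set hf_int (ae_of_all _ hf_nonneg) hs.eventuallyLE
    _ = (∫ x in closedBall ξ (1 / lam), f x) +
          ∫ x in closedBall ξ ρ \ closedBall ξ (1 / lam), f x := by
        rw [← setIntegral_union disjoint_sdiff_right
          (measurableSet_closedBall.diff measurableSet_closedBall)
          (hf_int.mono_set (closedBall_subset_closedBall hρ)) (hf_int.mono_set sdiff_subset),
          union_sdiff_cancel (closedBall_subset_closedBall hρ)]
    _ ≤ _ := add_le_add (setIntegral_closedBall_bubble_rpow_mul_norm_sq_le hN hlam ξ hscale.le)
        (setIntegral_annulus_bubble_rpow_mul_norm_sq_le hN hlam ξ hscale hρ)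
    _ = _ := by
        rw [← rpow_sub_two_div_two_mul_inv_pow hlam, one_div_pow, div_div_eq_mul_div, div_one,
          one_div (lam ^ N)]
        ring

end Bubble

/-- **Second-order moment estimate:** for `N ≥ 5` and `R > 1` there is `C > 0`, depending
only on `N` and `R`, such that for all `λ ≥ 2` and `|ξ| ≤ 1`,
`∫_{B(0,R)} U_{λ,ξ}(x)^{(N+2)/(N-2)} |x-ξ|² dx ≤ C λ^{-(N+2)/2} log λ`. -/
theorem bubble_second_moment_estimate (N : ℕ) (hN : 5 ≤ N) (R : ℝ) (hR : 1 < R) :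
    ∃ C : ℝ, 0 < C ∧ ∀ lam : ℝ, 2 ≤ lam → ∀ ξ : EuclideanSpace ℝ (Fin N), ‖ξ‖ ≤ 1 →
      ∫ x in Metric.ball (0 : EuclideanSpace ℝ (Fin N)) R,
          bubble N lam ξ x ^ (((N : ℝ) + 2) / ((N : ℝ) - 2)) * ‖x - ξ‖ ^ 2 ≤
        C * lam ^ (-((N : ℝ) + 2) / 2) * Real.log lam := by
  set ω := volume.real (ball (0 : EuclideanSpace ℝ (Fin N)) 1)
  obtain ⟨C, hC, hlog⟩ :=
    exists_pos_add_mul_log_le_mul_log (ω + N * ω * Real.log (R + 1)) (N * ω)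
  refine ⟨C, hC, fun lam hlam ξ hξ => ?_⟩
  have hlam0 : 0 < lam := by linarith
  have hball : ball (0 : EuclideanSpace ℝ (Fin N)) R ⊆ closedBall ξ (R + 1) := fun x hx => by
    rw [mem_closedBall, dist_eq_norm]
    linarith [norm_sub_le x ξ, mem_ball_zero_iff.mp hx]
  have hscale : 1 / lam ≤ R + 1 := by
    rw [div_le_iff₀ hlam0]
    nlinarith
  calc _ ≤ lam ^ (-((N : ℝ) + 2) / 2) * (ω + N * ω * Real.log ((R + 1) * lam)) :=
        setIntegral_bubble_rpow_mul_norm_sq_le (by omega) hlam0 ξ hscale hball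
    _ = lam ^ (-((N : ℝ) + 2) / 2) * (ω + N * ω * Real.log (R + 1) + N * ω * Real.log lam) := by
        rw [Real.log_mul (by linarith) hlam0.ne']
        ring
    _ ≤ lam ^ (-((N : ℝ) + 2) / 2) * (C * Real.log lam) := by
        gcongr
        exact hlog lam hlam
    _ = _ := by ring
end
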